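/- arXiv:1707.01618 — 2 statements merged into one kernel-verified Lean document; each statement's English description precedes it below -/
import Mathlib

section
/- Let A = KΔ/I be a bound quiver algebra and α a 2-cocycle vanishing on trivial paths. Then for all vertices i,j, the number of arrows from i to j in the ordinary quiver of A is at most the number of arrows from i to j in the ordinary quiver of T_α(A), which is at most the number of arrows from i to j in the ordinary quiver of the trivial extension T_0(A) = A ⋉ D(A). Hence Δ ⊆ Δ_{T_α(A)} ⊆ Δ_{T_0(A)} as quivers on the same vertex set. -/
open Module

variable {K A : Type*}

/-- Left action of `A` on `D(A) = Hom_K(A,K)`: `(a • f) c = f (c * a)`. -/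
noncomputable def lact [Field K] [Ring A] [Algebra K A]
    (a : A) (f : Module.Dual K A) : Module.Dual K A :=
  f ∘ₗ LinearMap.mulRight K a

/-- Right action of `A` on `D(A)`: `(f • b) c = f (b * c)`. -/
noncomputable def ract [Field K] [Ring A] [Algebra K A]
    (f : Module.Dual K A) (b : A) : Module.Dual K A :=
  f ∘ₗ LinearMap.mulLeft K b

/-- `α : A × A → D(A)` is a Hochschild 2-cocycle: it is `K`-bilinear and satisfies
`a·α(b,c) − α(ab,c) + α(a,bc) − α(a,b)·c = 0`. -/
def IsHochschild2Cocycle [Field K] [Ring A] [Algebra K A]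
    (α : A → A → Module.Dual K A) : Prop :=
  (∀ a b c : A, α (a + b) c = α a c + α b c) ∧
  (∀ a b c : A, α a (b + c) = α a b + α a c) ∧
  (∀ (k : K) (a b : A), α (k • a) b = k • α a b) ∧
  (∀ (k : K) (a b : A), α a (k • b) = k • α a b) ∧
  (∀ a b c : A, lact a (α b c) - α (a * b) c + α a (b * c) - ract (α a b) c = 0)

/-- The multiplication `(a,x)(b,y) = (ab, a·y + x·b + α(a,b))` on `A ⊕ D(A)`. -/
noncomputable def extMul [Field K] [Ring A] [Algebra K A]
    (α : A → A → Module.Dual K A) (p q : A × Module.Dual K A) :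
    A × Module.Dual K A :=
  (p.1 * q.1, lact p.1 q.2 + ract p.2 q.1 + α p.1 q.1)

/-- The element `(1_A, −α(1,1))` of `T_α(A)`. -/
noncomputable def extOne [Field K] [Ring A] [Algebra K A]
    (α : A → A → Module.Dual K A) : A × Module.Dual K A :=
  ((1 : A), -α 1 1)

section Jacobson

variable {B : Type*}

/-- `S` is a left ideal of `B` with respect to the multiplication `mul`. -/
def IsLeftIdealSet [AddCommGroup B] (mul : B → B → B) (S : Set B) : Prop :=
  (0 : B) ∈ S ∧ (∀ x ∈ S, ∀ y ∈ S, x + y ∈ S) ∧ (∀ x ∈ S, -x ∈ S) ∧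
    ∀ b : B, ∀ x ∈ S, mul b x ∈ S

/-- `S` is a maximal (proper) left ideal of `B`. -/
def IsMaxLeftIdealSet [AddCommGroup B] (mul : B → B → B) (S : Set B) : Prop :=
  IsLeftIdealSet mul S ∧ S ≠ Set.univ ∧
    ∀ S', IsLeftIdealSet mul S' → S ⊆ S' → S' ≠ Set.univ → S' = S

/-- The Jacobson radical of `B`: the intersection of all maximal left ideals. -/
def jacSet [AddCommGroup B] (mul : B → B → B) : Set B :=
  ⋂₀ {S | IsMaxLeftIdealSet mul S}

/-- The square of the Jacobson radical: the additive span of products of two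
elements of the radical. -/
def jacSqSet [AddCommGroup B] (mul : B → B → B) : Set B :=
  (AddSubgroup.closure
    {z | ∃ x ∈ jacSet mul, ∃ y ∈ jacSet mul, z = mul x y} : Set B)

variable (K : Type*) [Field K]

/-- The subspace `f·J(B)·g` of `B`. -/
noncomputable def cornerJ [AddCommGroup B] [Module K B] (mul : B → B → B) (f g : B) :
    Submodule K B :=
  Submodule.span K {y | ∃ x ∈ jacSet mul, y = mul (mul f x) g}

/-- The subspace `f·J(B)²·g` of `B`. -/
noncomputable def cornerJSq [AddCommGroup B] [Module K B] (mul : B → B → B) (f g : B) :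
    Submodule K B :=
  Submodule.span K {y | ∃ x ∈ jacSqSet mul, y = mul (mul f x) g}

/-- The number of arrows `i → j` of the ordinary quiver of a basic algebra `B`
with primitive idempotents `f = f_i`, `g = f_j`:
`dim_K f (J(B)/J(B)²) g = dim_K (f·J(B)·g / f·J(B)²·g)`. -/
noncomputable def numArrows [AddCommGroup B] [Module K B] (mul : B → B → B) (f g : B) : ℕ :=
  Module.finrank K
    ((cornerJ K mul f g) ⧸
      Submodule.comap (cornerJ K mul f g).subtype (cornerJSq K mul f g))

/-- An idempotent is primitive if it is nonzero and admits no decomposition into two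
nonzero orthogonal idempotents. -/
def IsPrimitiveIdem [AddCommGroup B] (mul : B → B → B) (a : B) : Prop :=
  mul a a = a ∧ a ≠ 0 ∧
    ∀ b c : B, mul b b = b → mul c c = c → mul b c = 0 → mul c b = 0 →
      b + c = a → b = 0 ∨ c = 0

end Jacobson

section Subspaces

variable {K A : Type*} [Field K] [Ring A] [Algebra K A]

/-- The subspace `J(A)·D(A)` of `D(A)`. -/
noncomputable def jacD (A : Type*) [Ring A] (K : Type*) [Field K] [Algebra K A] :
    Submodule K (Module.Dual K A) :=
  Submodule.span K
    {g | ∃ a ∈ jacSet (fun x y : A => x * y), ∃ f : Module.Dual K A, g = lact a f}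

/-- The subspace `D(A)·J(A)` of `D(A)`. -/
noncomputable def dJac (A : Type*) [Ring A] (K : Type*) [Field K] [Algebra K A] :
    Submodule K (Module.Dual K A) :=
  Submodule.span K
    {g | ∃ b ∈ jacSet (fun x y : A => x * y), ∃ f : Module.Dual K A, g = ract f b}

/-- The subspace `α(J(A), J(A))` of `D(A)`. -/
noncomputable def alphaJJ (α : A → A → Module.Dual K A) :
    Submodule K (Module.Dual K A) :=
  Submodule.span K
    {g | ∃ a ∈ jacSet (fun x y : A => x * y), ∃ b ∈ jacSet (fun x y : A => x * y),
      g = α a b}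

end Subspaces

/-!
If `β(b, 1) = 0`, the radical of `T_β = A ⊕ D(A)` (product `extMul β`) is `J(A) ⊕ D(A)`: a maximal
left ideal `M` absorbs `0 ⊕ D(A)`, for otherwise `M + (0 ⊕ D(A))` would contain some `(1, g)`, and
`(b, f - b·g) (1, g) = (b, f)` would make `M` everything. For the cocycle `α` this vanishing follows
from `α(b, e_j) = 0` and `∑ e_j = 1`.

With `σ x = e_i x e_j` and `τ f = e_i f e_j`, the corner `e_i J(T_β) e_j` is then `σ J(A) ⊕ τ D(A)`,
while the corner of `J(T_β)²` projects onto `σ J(A)²` and meets `0 ⊕ D(A)` in a subspace squeezed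
between `τ (J(A) D(A) + D(A) J(A))` and `τ D(A)`, the lower bound being attained for `β = 0`.
Counting dimensions gives both inequalities.
-/

lemma prod_univ_eq_univ_iff {α β : Type*} [Nonempty β] {s : Set α} :
    s ×ˢ (Set.univ : Set β) = Set.univ ↔ s = Set.univ := by
  rw [← Set.univ_prod_univ, Set.prod_eq_iff_eq Set.univ_nonempty]

section LinearAlgebra

variable [Field K] {V W : Type*} [AddCommGroup V] [Module K V] [AddCommGroup W] [Module K W]

lemma span_addSubgroup_closure (s : Set V) :
    Submodule.span K (AddSubgroup.closure s : Set V) = Submodule.span K s :=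
  le_antisymm
    (Submodule.span_le.2 fun _ hx =>
      (AddSubgroup.closure_le (Submodule.span K s).toAddSubgroup).2 Submodule.subset_span hx)
    (Submodule.span_mono AddSubgroup.subset_closure)

lemma finrank_eq_finrank_map_fst_add_finrank_comap_inr [FiniteDimensional K V]
    [FiniteDimensional K W] (S : Submodule K (V × W)) :
    finrank K S = finrank K (S.map (LinearMap.fst K V W)) +
      finrank K (S.comap (LinearMap.inr K V W)) := by
  set π := (LinearMap.fst K V W).domRestrict S
  set ι := (LinearMap.inr K V W).restrict (p := S.comap (LinearMap.inr K V W)) (q := S)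
    fun _ hx => hx
  have hι : Function.Injective ι := fun x y hxy =>
    Subtype.ext (LinearMap.inr_injective (congrArg Subtype.val hxy :))
  have hker : LinearMap.ker π = LinearMap.range ι := by
    ext ⟨⟨v, w⟩, hS⟩
    constructor
    · rintro (rfl : v = 0)
      exact ⟨⟨w, hS⟩, rfl⟩
    · rintro ⟨y, hy⟩
      exact (congrArg (fun z : S => z.1.1) hy).symm
  rw [← π.finrank_range_add_finrank_ker, LinearMap.range_domRestrict, hker,
    LinearMap.finrank_range_of_inj hι]

end LinearAlgebra

section Jacobson

variable [Field K] {B : Type*} [AddCommGroup B] [Module K B]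

lemma isLeftIdealSet_jacSet (m : B → B → B) : IsLeftIdealSet m (jacSet m) :=
  ⟨fun _ hS => hS.1.1, fun _ hx _ hy S hS => hS.1.2.1 _ (hx S hS) _ (hy S hS),
    fun _ hx S hS => hS.1.2.2.1 _ (hx S hS), fun b _ hx S hS => hS.1.2.2.2 b _ (hx S hS)⟩

variable (K) in
noncomputable def jacSqSpan (mul : B → B → B) : Submodule K B :=
  Submodule.span K {z | ∃ x ∈ jacSet mul, ∃ y ∈ jacSet mul, z = mul x y}

lemma jacSqSpan_le_span_jacSet (mul : B → B → B) :
    jacSqSpan K mul ≤ Submodule.span K (jacSet mul) :=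
  Submodule.span_mono fun _ ⟨x, _, _, hy, hz⟩ => hz ▸ (isLeftIdealSet_jacSet mul).2.2.2 x _ hy

variable {mul : B → B → B} {f g : B} (φ : B →ₗ[K] B)

lemma cornerJ_eq_map (hφ : ∀ x, mul (mul f x) g = φ x) :
    cornerJ K mul f g = (Submodule.span K (jacSet mul)).map φ := by
  simp only [cornerJ, Submodule.map_span, ← hφ]
  congr 1
  ext
  simp [eq_comm]

lemma cornerJSq_eq_map (hφ : ∀ x, mul (mul f x) g = φ x) :
    cornerJSq K mul f g = (jacSqSpan K mul).map φ := by
  rw [jacSqSpan, ← span_addSubgroup_closure, Submodule.map_span, cornerJSq]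
  congr 1
  ext
  simp [jacSqSet, hφ, eq_comm]

lemma numArrows_add_finrank_cornerJSq [FiniteDimensional K B]
    (hφ : ∀ x, mul (mul f x) g = φ x) :
    numArrows K mul f g + finrank K (cornerJSq K mul f g) =
      finrank K (cornerJ K mul f g) := by
  have hle : cornerJSq K mul f g ≤ cornerJ K mul f g := by
    rw [cornerJSq_eq_map φ hφ, cornerJ_eq_map φ hφ]
    exact Submodule.map_mono (jacSqSpan_le_span_jacSet mul)
  rw [numArrows, ← (Submodule.comapSubtypeEquivOfLe hle).finrank_eq]
  exact Submodule.finrank_quotient_add_finrank _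

end Jacobson

section Actions

variable [Field K] [Ring A] [Algebra K A]

@[simp] lemma lact_apply (a : A) (f : Module.Dual K A) (c : A) : lact a f c = f (c * a) := rfl

@[simp] lemma ract_apply (f : Module.Dual K A) (b c : A) : ract f b c = f (b * c) := rfl

@[simp] lemma lact_zero (a : A) : lact a (0 : Module.Dual K A) = 0 := rfl

@[simp] lemma zero_ract (b : A) : ract (0 : Module.Dual K A) b = 0 := rfl

@[simp] lemma ract_one (f : Module.Dual K A) : ract f 1 = f := by ext; simp

end Actions

section Radical

variable [Field K] [Ring A] [Algebra K A] {β : A → A → Module.Dual K A}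

lemma isLeftIdealSet_prod_univ_iff {P : Set A} :
    IsLeftIdealSet (extMul β) (P ×ˢ (Set.univ : Set (Module.Dual K A))) ↔
      IsLeftIdealSet (· * ·) P := by
  constructor
  · rintro ⟨h0, hadd, hneg, hmul⟩
    refine ⟨h0.1, fun x hx y hy => (hadd (x, 0) ⟨hx, trivial⟩ (y, 0) ⟨hy, trivial⟩).1,
      fun x hx => (hneg (x, 0) ⟨hx, trivial⟩).1,
      fun b x hx => (hmul (b, 0) (x, 0) ⟨hx, trivial⟩).1⟩
  · rintro ⟨h0, hadd, hneg, hmul⟩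
    exact ⟨⟨h0, trivial⟩, fun x hx y hy => ⟨hadd _ hx.1 _ hy.1, trivial⟩,
      fun x hx => ⟨hneg _ hx.1, trivial⟩, fun b x hx => ⟨hmul _ _ hx.1, trivial⟩⟩

lemma eq_image_fst_prod_univ {M : Set (A × Module.Dual K A)}
    (hM : IsLeftIdealSet (extMul β) M) (hD : ∀ g, ((0 : A), g) ∈ M) :
    M = (Prod.fst '' M) ×ˢ Set.univ := by
  ext ⟨a, f⟩
  refine ⟨fun h => ⟨⟨_, h, rfl⟩, trivial⟩, ?_⟩
  rintro ⟨⟨⟨a', f'⟩, h, rfl⟩, -⟩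
  simpa using hM.2.1 _ h _ (hD (f - f'))

lemma eq_univ_of_one_mem (hone : ∀ b, β b 1 = 0) {M : Set (A × Module.Dual K A)}
    (hM : IsLeftIdealSet (extMul β) M) {g : Module.Dual K A} (hg : ((1 : A), g) ∈ M) :
    M = Set.univ := by
  refine Set.eq_univ_of_forall fun ⟨b, f⟩ => ?_
  have hprod : extMul β (b, f - lact b g) ((1 : A), g) = (b, f) := by
    simp [extMul, hone]
  simpa [hprod] using hM.2.2.2 (b, f - lact b g) _ hg

lemma mk_zero_mem_of_isMaxLeftIdealSet (hone : ∀ b, β b 1 = 0) {M : Set (A × Module.Dual K A)}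
    (hM : IsMaxLeftIdealSet (extMul β) M) (g : Module.Dual K A) : ((0 : A), g) ∈ M := by
  set M' := {z | ∃ m ∈ M, ∃ h : Module.Dual K A, z = m + (0, h)}
  have hM' : IsLeftIdealSet (extMul β) M' := by
    refine ⟨⟨0, hM.1.1, 0, (add_zero _).symm⟩, ?_, ?_, ?_⟩
    · rintro _ ⟨m, hm, h, rfl⟩ _ ⟨n, hn, k, rfl⟩
      exact ⟨m + n, hM.1.2.1 m hm n hn, h + k, by ext <;> simp; abel⟩
    · rintro _ ⟨m, hm, h, rfl⟩
      exact ⟨-m, hM.1.2.2.1 m hm, -h, by ext <;> simp; abel⟩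
    · rintro b _ ⟨m, hm, h, rfl⟩
      refine ⟨extMul β b m, hM.1.2.2.2 b m hm, lact b.1 h, ?_⟩
      ext c <;> simp [extMul]; abel
  have hle : M ⊆ M' := fun m hm => ⟨m, hm, 0, by simp⟩
  by_cases hU : M' = Set.univ
  · obtain ⟨m, hm, h, hm1⟩ : ((1 : A), (0 : Module.Dual K A)) ∈ M' := hU ▸ Set.mem_univ _
    have hm : ((1 : A), m.2) ∈ M := by
      rwa [show ((1 : A), m.2) = m from Prod.ext (by simpa using congrArg Prod.fst hm1) rfl]
    exact absurd (eq_univ_of_one_mem hone hM.1 hm) hM.2.1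
  · rw [← hM.2.2 M' hM' hle hU]
    exact ⟨0, hM.1.1, g, by simp⟩

lemma isMaxLeftIdealSet_prod_univ_iff {P : Set A} :
    IsMaxLeftIdealSet (extMul β) (P ×ˢ (Set.univ : Set (Module.Dual K A))) ↔
      IsMaxLeftIdealSet (· * ·) P := by
  constructor
  · rintro ⟨hI, hne, hmax⟩
    refine ⟨isLeftIdealSet_prod_univ_iff.1 hI, fun h => hne (prod_univ_eq_univ_iff.2 h),
      fun Q hQ hPQ hQne => ?_⟩
    have hQP := hmax (Q ×ˢ Set.univ) (isLeftIdealSet_prod_univ_iff.2 hQ)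
      (Set.prod_mono hPQ subset_rfl)
      fun h => hQne (prod_univ_eq_univ_iff.1 h)
    exact (Set.prod_eq_iff_eq Set.univ_nonempty).1 hQP
  · rintro ⟨hI, hne, hmax⟩
    refine ⟨isLeftIdealSet_prod_univ_iff.2 hI, fun h => hne (prod_univ_eq_univ_iff.1 h),
      fun S hS hPS hSne => ?_⟩
    have hSeq := eq_image_fst_prod_univ hS fun g => hPS ⟨hI.1, trivial⟩
    have hQ : IsLeftIdealSet (· * ·) (Prod.fst '' S) :=
      isLeftIdealSet_prod_univ_iff.1 (hSeq ▸ hS)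
    rw [hSeq, hmax _ hQ (fun a ha => ⟨(a, 0), hPS ⟨ha, trivial⟩, rfl⟩)
      fun h => hSne (by rw [hSeq, h, Set.univ_prod_univ])]

theorem jacSet_extMul (hone : ∀ b, β b 1 = 0) :
    jacSet (extMul β) = jacSet (· * ·) ×ˢ (Set.univ : Set (Module.Dual K A)) := by
  ext ⟨a, f⟩
  simp only [jacSet, Set.mem_sInter, Set.mem_ofPred_eq, Set.mem_prod, Set.mem_univ, and_true]
  refine ⟨fun h P hP => (h _ (isMaxLeftIdealSet_prod_univ_iff.2 hP)).1, fun h M hM => ?_⟩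
  have hMeq := eq_image_fst_prod_univ hM.1 (mk_zero_mem_of_isMaxLeftIdealSet hone hM)
  rw [hMeq] at hM ⊢
  exact ⟨h _ (isMaxLeftIdealSet_prod_univ_iff.1 hM), trivial⟩

end Radical

section Extension

open LinearMap Submodule

variable [Field K] [Ring A] [Algebra K A] {β : A → A → Module.Dual K A}

variable (K) in
noncomputable def extCorner (u v : A) : A × Module.Dual K A →ₗ[K] A × Module.Dual K A :=
  (mulLeftRight K (u, v)).prodMap (mulLeftRight K (v, u)).dualMap

lemma extMul_extMul_eq_extCorner {u v : A} (hu : ∀ a, β u a = 0) (hv : ∀ a, β a v = 0)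
    (z : A × Module.Dual K A) :
    extMul β (extMul β (u, 0) z) (v, 0) = extCorner K u v z := by
  ext c
  · simp [extMul, extCorner]
  · simp [extMul, extCorner, hu, hv, mul_assoc]

lemma span_jacSet_extMul (hone : ∀ b, β b 1 = 0) :
    span K (jacSet (extMul β)) = (span K (jacSet (· * · : A → A → A))).prod ⊤ := by
  rw [jacSet_extMul hone, span_prod_eq K (isLeftIdealSet_jacSet _).1 (Set.mem_univ 0), span_univ]

lemma cornerJ_extMul (hone : ∀ b, β b 1 = 0) {u v : A} (hu : ∀ a, β u a = 0)
    (hv : ∀ a, β a v = 0) :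
    cornerJ K (extMul β) (u, 0) (v, 0) =
      ((span K (jacSet (· * · : A → A → A))).map (mulLeftRight K (u, v))).prod
        (range (mulLeftRight K (v, u)).dualMap) := by
  rw [cornerJ_eq_map _ (extMul_extMul_eq_extCorner hu hv), span_jacSet_extMul hone, extCorner,
    prodMap_map_prod, Submodule.map_top]

lemma map_fst_jacSqSpan_extMul (hone : ∀ b, β b 1 = 0) :
    (jacSqSpan K (extMul β)).map (fst K A (Module.Dual K A)) = jacSqSpan K (· * ·) := by
  rw [jacSqSpan, jacSqSpan, Submodule.map_span, jacSet_extMul hone]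
  congr 1
  ext w
  constructor
  · rintro ⟨_, ⟨x, hx, y, hy, rfl⟩, rfl⟩
    exact ⟨x.1, hx.1, y.1, hy.1, rfl⟩
  · rintro ⟨a, ha, b, hb, rfl⟩
    exact ⟨_, ⟨(a, 0), ⟨ha, trivial⟩, (b, 0), ⟨hb, trivial⟩, rfl⟩, rfl⟩

lemma jacD_sup_dJac_le_comap_inr_jacSqSpan (hone : ∀ b, β b 1 = 0) (hl : ∀ b, β 0 b = 0)
    (hr : ∀ a, β a 0 = 0) :
    jacD A K ⊔ dJac A K ≤ (jacSqSpan K (extMul β)).comap (inr K A (Module.Dual K A)) := by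
  have hJ : ∀ {a : A}, a ∈ jacSet (· * ·) → ∀ f : Module.Dual K A, (a, f) ∈ jacSet (extMul β) :=
    fun ha f => (jacSet_extMul hone).symm ▸ ⟨ha, trivial⟩
  have h0 := (isLeftIdealSet_jacSet (· * · : A → A → A)).1
  refine sup_le (span_le.2 ?_) (span_le.2 ?_)
  · rintro _ ⟨a, ha, g, rfl⟩
    exact subset_span ⟨(a, 0), hJ ha 0, (0, g), hJ h0 g, by simp [extMul, hr]⟩
  · rintro _ ⟨b, hb, f, rfl⟩
    exact subset_span ⟨(0, f), hJ h0 f, (b, 0), hJ hb 0, by simp [extMul, hl]⟩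

lemma jacSqSpan_extMul_zero_le :
    jacSqSpan K (extMul (fun _ _ => (0 : Module.Dual K A))) ≤
      (jacSqSpan K (· * ·)).prod (jacD A K ⊔ dJac A K) := by
  refine span_le.2 ?_
  rintro _ ⟨x, hx, y, hy, rfl⟩
  rw [jacSet_extMul fun _ => rfl] at hx hy
  refine ⟨subset_span ⟨x.1, hx.1, y.1, hy.1, rfl⟩, ?_⟩
  show lact x.1 y.2 + ract x.2 y.1 + 0 ∈ _
  rw [add_zero]
  exact add_mem (mem_sup_left (subset_span ⟨x.1, hx.1, y.2, rfl⟩))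
    (mem_sup_right (subset_span ⟨y.1, hy.1, x.2, rfl⟩))

variable (K) in
noncomputable def jacSqSlice (β : A → A → Module.Dual K A) (u v : A) :
    Submodule K (Module.Dual K A) :=
  ((jacSqSpan K (extMul β)).map (extCorner K u v)).comap (inr K A (Module.Dual K A))

lemma map_jacD_sup_dJac_le_jacSqSlice (hone : ∀ b, β b 1 = 0) (hl : ∀ b, β 0 b = 0)
    (hr : ∀ a, β a 0 = 0) (u v : A) :
    (jacD A K ⊔ dJac A K).map (mulLeftRight K (v, u)).dualMap ≤ jacSqSlice K β u v := by
  rintro _ ⟨n, hn, rfl⟩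
  exact ⟨(0, n), jacD_sup_dJac_le_comap_inr_jacSqSpan hone hl hr hn, by simp [extCorner]⟩

lemma jacSqSlice_le_range (u v : A) :
    jacSqSlice K β u v ≤ range (mulLeftRight K (v, u)).dualMap := by
  rintro _ ⟨w, -, hw⟩
  exact ⟨w.2, congrArg Prod.snd hw⟩

lemma jacSqSlice_zero_le (u v : A) :
    jacSqSlice K (fun _ _ => 0) u v ≤ (jacD A K ⊔ dJac A K).map (mulLeftRight K (v, u)).dualMap :=
  calc jacSqSlice K (fun _ _ => 0) u v
      ≤ (((jacSqSpan K (· * ·)).prod (jacD A K ⊔ dJac A K)).map (extCorner K u v)).comap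
          (inr K A (Module.Dual K A)) :=
        comap_mono (map_mono jacSqSpan_extMul_zero_le)
    _ = _ := by rw [extCorner, prodMap_map_prod, prod_comap_inr]

variable [FiniteDimensional K A]

lemma numArrows_mul_add_finrank (u v : A) :
    numArrows K (· * ·) u v + finrank K ((jacSqSpan K (· * ·)).map (mulLeftRight K (u, v))) =
      finrank K ((span K (jacSet (· * · : A → A → A))).map (mulLeftRight K (u, v))) := by
  have hσ : ∀ x, u * x * v = mulLeftRight K (u, v) x := fun _ => rfl
  have h := numArrows_add_finrank_cornerJSq (mul := (· * ·)) _ hσ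
  rwa [cornerJSq_eq_map _ hσ, cornerJ_eq_map _ hσ] at h

lemma numArrows_extMul_add_finrank (hone : ∀ b, β b 1 = 0) {u v : A} (hu : ∀ a, β u a = 0)
    (hv : ∀ a, β a v = 0) :
    numArrows K (extMul β) (u, 0) (v, 0) +
        finrank K ((jacSqSpan K (· * ·)).map (mulLeftRight K (u, v))) +
        finrank K (jacSqSlice K β u v) =
      finrank K ((span K (jacSet (· * · : A → A → A))).map (mulLeftRight K (u, v))) +
        finrank K (range (mulLeftRight K (v, u)).dualMap) := by
  have hφ := extMul_extMul_eq_extCorner hu hv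
  have hfst : ((jacSqSpan K (extMul β)).map (extCorner K u v)).map (fst K A (Module.Dual K A)) =
      (jacSqSpan K (· * ·)).map (mulLeftRight K (u, v)) := by
    rw [← map_fst_jacSqSpan_extMul hone, ← map_comp, ← map_comp]
    rfl
  have h := numArrows_add_finrank_cornerJSq _ hφ
  rw [cornerJSq_eq_map _ hφ, cornerJ_extMul hone hu hv,
    finrank_eq_finrank_map_fst_add_finrank_comap_inr ((jacSqSpan K (extMul β)).map _), hfst,
    finrank_eq_finrank_map_fst_add_finrank_comap_inr (Submodule.prod _ _), prod_map_fst,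
    prod_comap_inr] at h
  rw [jacSqSlice, ← h, add_assoc]

theorem numArrows_mul_le_extMul_le_extMul_zero (hone : ∀ b, β b 1 = 0) (hl : ∀ b, β 0 b = 0)
    (hr : ∀ a, β a 0 = 0) {u v : A} (hu : ∀ a, β u a = 0) (hv : ∀ a, β a v = 0) :
    numArrows K (· * ·) u v ≤ numArrows K (extMul β) (u, 0) (v, 0) ∧
      numArrows K (extMul β) (u, 0) (v, 0) ≤
        numArrows K (extMul (fun _ _ => (0 : Module.Dual K A))) (u, 0) (v, 0) := by
  have hA := numArrows_mul_add_finrank (K := K) u v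
  have hβ := numArrows_extMul_add_finrank hone hu hv
  have h0 := numArrows_extMul_add_finrank (β := fun _ _ => (0 : Module.Dual K A))
    (u := u) (v := v) (fun _ => rfl) (fun _ => rfl) (fun _ => rfl)
  have hlower := finrank_mono (map_jacD_sup_dJac_le_jacSqSlice hone hl hr u v)
  have hupper := finrank_mono (jacSqSlice_le_range (K := K) (β := β) u v)
  have hzero := finrank_mono (jacSqSlice_zero_le (K := K) u v)
  -- with `d = dim σJ - dim σJ²`: `N_A = d`, `N_β = d + dim τD - dim sliceβ`,
  -- `N_0 = d + dim τD - dim slice₀`, and `dim slice₀ ≤ dim τ(JD + DJ) ≤ dim sliceβ ≤ dim τD`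
  omega

end Extension

theorem ext_quiver_chain_general [Field K] [Ring A] [Algebra K A] [FiniteDimensional K A]
    {l : ℕ} (e : Fin l → A)
    (hsum : ∑ i, e i = 1)
    (α : A → A → Module.Dual K A) (h : IsHochschild2Cocycle α)
    (hα : ∀ i (a : A), α (e i) a = 0 ∧ α a (e i) = 0) :
    ∀ i j,
      numArrows K (fun x y : A => x * y) (e i) (e j) ≤
        numArrows K (extMul α) ((e i, 0) : A × Module.Dual K A) (e j, 0) ∧
      numArrows K (extMul α) ((e i, 0) : A × Module.Dual K A) (e j, 0) ≤
        numArrows K (extMul (fun _ _ => (0 : Module.Dual K A)))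
          ((e i, 0) : A × Module.Dual K A) (e j, 0) := by
  intro i j
  let αl (b : A) : A →+ Module.Dual K A := AddMonoidHom.mk' (α · b) fun x y => h.1 x y b
  let αr (a : A) : A →+ Module.Dual K A := AddMonoidHom.mk' (α a) (h.2.1 a)
  have hone : ∀ b, α b 1 = 0 := fun b => by
    rw [← hsum]
    exact (map_sum (αr b) e Finset.univ).trans (Finset.sum_eq_zero fun k _ => (hα k b).2)
  exact numArrows_mul_le_extMul_le_extMul_zero hone (fun b => (αl b).map_zero)
    (fun a => (αr a).map_zero) (fun a => (hα i a).1) (fun a => (hα j a).2)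

/-- for every pair of vertices, the arrow counts of the ordinary quivers
satisfy `N_A(i,j) ≤ N_{T_α(A)}(i,j) ≤ N_{T_0(A)}(i,j)`; hence, as quivers on the common
vertex set, `Δ ⊆ Δ_{T_α(A)} ⊆ Δ_{T_0(A)}`. -/
theorem ext_quiver_chain [Field K] [Ring A] [Algebra K A] [FiniteDimensional K A]
    {l : ℕ} (e : Fin l → A)
    (hidem : ∀ i, IsPrimitiveIdem (fun x y : A => x * y) (e i))
    (horth : ∀ i j, i ≠ j → e i * e j = 0)
    (hsum : ∑ i, e i = 1)
    (α : A → A → Module.Dual K A) (h : IsHochschild2Cocycle α)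
    (hα : ∀ i (a : A), α (e i) a = 0 ∧ α a (e i) = 0) :
    ∀ i j,
      numArrows K (fun x y : A => x * y) (e i) (e j) ≤
        numArrows K (extMul α) ((e i, 0) : A × Module.Dual K A) (e j, 0) ∧
      numArrows K (extMul α) ((e i, 0) : A × Module.Dual K A) (e j, 0) ≤
        numArrows K (extMul (fun _ _ => (0 : Module.Dual K A)))
          ((e i, 0) : A × Module.Dual K A) (e j, 0) :=
  ext_quiver_chain_general e hsum α h hα
end

section
/- Let A = KΔ/R_Δ^n be a truncated cycle algebra on the cyclic quiver with s vertices, s | n. With basis u_i = x_{i+1}⋯x_{i+n−1} ⊗ x_i of (A ⊗_{KΔ_0^e} KΔ_1)_n and v_i = e_i ⊗ x_i x_{i+1}⋯x_{i+n−1} of (A ⊗_{KΔ_0^e} KΔ_n)_n, the differential (d̃_2)_n is represented by the s × s matrix all of whose entries equal n/s (i.e. (d̃_2)_n(u_j) = (n/s)·(v_1 + ⋯ + v_s) for every j). -/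
/-- The degree-`q` component of Sköldberg's complex for the truncated cycle algebra
`A = KΔ/R_Δ^n` on the cyclic quiver with `s` vertices: a `K`-vector space with basis the
cycles of length `q` (one for each starting vertex, nonempty precisely when `s ∣ q`). -/
abbrev CycSp (K : Type*) [Field K] (s q : ℕ) : Type _ := {_i : ZMod s // s ∣ q} → K

/-- The degree-`q` part `(d̃₃)_q : (A ⊗ P₃)_q → (A ⊗ P₂)_q` of the differential,
`(d̃₃)_q(a₁⋯a_{q−n−1} ⊗ a_{q−n}⋯a_q)
  = a₁⋯a_{q−n} ⊗ a_{q−n+1}⋯a_q − a_q a₁⋯a_{q−n−1} ⊗ a_{q−n}⋯a_{q−1}`;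
on the basis `w_i ↦ v_{i+1} − v_i`, and it is zero outside the range
`n+1 ≤ q ≤ 2n−1` where source or target vanish. -/
noncomputable def dTilde3 (K : Type*) [Field K] (s n q : ℕ) :
    CycSp K s q →ₗ[K] CycSp K s q :=
  if n + 1 ≤ q ∧ q ≤ 2 * n - 1 then
    LinearMap.funLeft K K (fun i => ⟨i.1 - 1, i.2⟩) - LinearMap.id
  else 0

/-- The degree-`q` part `(d̃₂)_q : (A ⊗ P₂)_q → (A ⊗ P₁)_q` of the differential,
`(d̃₂)_q(a₁⋯a_{q−n} ⊗ a_{q−n+1}⋯a_q)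
  = Σ_{j=0}^{n−1} a_{j+q−n+2}⋯a_q a₁⋯a_{j+q−n} ⊗ a_{j+q−n+1}`;
on the basis `v_i ↦ Σ_{j=0}^{n−1} u_{i+j}`, and it is zero for `q ≠ n`
(the terms vanish in `A` for `q ≥ n+1`). -/
noncomputable def dTilde2 (K : Type*) [Field K] (s n q : ℕ) :
    CycSp K s q →ₗ[K] CycSp K s q :=
  if q = n then
    ∑ j ∈ Finset.range n, LinearMap.funLeft K K (fun i => ⟨i.1 - (j : ZMod s), i.2⟩)
  else 0

/-- The degree-`q` component `HH_{2,q}(A) = ker (d̃₂)_q / im (d̃₃)_q` of the graded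
second Hochschild homology of the truncated cycle algebra. -/
noncomputable abbrev HH2q (K : Type*) [Field K] (s n q : ℕ) : Type _ :=
  LinearMap.ker (dTilde2 K s n q) ⧸
    Submodule.comap (LinearMap.ker (dTilde2 K s n q)).subtype
      (LinearMap.range (dTilde3 K s n q))

/-! The shift by `j` depends only on `j mod s`, so the `n = s · (n / s)` shifts in `(d̃₂)_n` run
`n / s` times through all of `ZMod s`; summing a basis vector over all of its shifts gives the
all-ones vector. -/

open Finset

theorem ZMod.sum_range_natCast {M : Type*} [AddCommMonoid M] (s : ℕ) [NeZero s]
    (f : ZMod s → M) : ∑ j ∈ range s, f j = ∑ c, f c :=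
  sum_nbij' (fun j => (j : ZMod s)) ZMod.val (by simp) (by simp [ZMod.val_lt])
    (fun _ hj => ZMod.val_natCast_of_lt (mem_range.1 hj)) (fun c _ => ZMod.natCast_zmod_val c)
    (fun _ _ => rfl)

theorem ZMod.sum_range_mul_natCast {M : Type*} [AddCommMonoid M] (s m : ℕ) [NeZero s]
    (f : ZMod s → M) : ∑ j ∈ range (s * m), f j = m • ∑ c, f c := by
  induction m with
  | zero => simp
  | succ m ih => simp [Nat.mul_succ, sum_range_add, ih, ZMod.sum_range_natCast, succ_nsmul]

theorem CycSp.sum_single_apply_sub (K : Type*) [Field K] {s n : ℕ} [NeZero s] (hd : s ∣ n)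
    (i : ZMod s) (x : {_i : ZMod s // s ∣ n}) :
    ∑ c : ZMod s, (Pi.single ⟨i, hd⟩ 1 : CycSp K s n) ⟨x.1 - c, x.2⟩ = 1 := by
  simpa [Pi.single_apply, Subtype.ext_iff] using
    (Equiv.subLeft x.1).sum_comp fun c => (Pi.single ⟨i, hd⟩ 1 : CycSp K s n) ⟨c, x.2⟩

theorem dTilde2_matrix_general (K : Type*) [Field K] (s n : ℕ) [NeZero s]
    (hd : s ∣ n) :
    ∀ i : ZMod s,
      dTilde2 K s n n (Pi.single ⟨i, hd⟩ 1) =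
        (((n / s : ℕ) : K)) •
          (∑ k : {_i : ZMod s // s ∣ n}, Pi.single k 1 : CycSp K s n) := by
  intro i
  ext x
  rw [univ_sum_single]
  simp only [dTilde2, if_true, LinearMap.sum_apply, LinearMap.funLeft_apply, Finset.sum_apply]
  rw [show range n = range (s * (n / s)) by rw [Nat.mul_div_cancel' hd],
    ZMod.sum_range_mul_natCast s (n / s)
      fun c => (Pi.single ⟨i, hd⟩ 1 : CycSp K s n) ⟨x.1 - c, x.2⟩,
    CycSp.sum_single_apply_sub K hd, nsmul_eq_mul, Pi.smul_apply, smul_eq_mul]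

/-- for `s ∣ n`, on the bases `u_i` of `(A ⊗ KΔ₀ᵉ KΔ₁)_n` and `v_i` of
`(A ⊗ KΔ₀ᵉ KΔ_n)_n`, the differential `(d̃₂)_n` is represented by the `s × s` matrix all
of whose entries equal `n/s`, i.e. it sends each basis vector to
`(n/s)·(v₁ + ⋯ + v_s)`. -/
theorem dTilde2_matrix (K : Type*) [Field K] (s n : ℕ) [NeZero s]
    (hn : 2 ≤ n) (hd : s ∣ n) :
    ∀ i : ZMod s,
      dTilde2 K s n n (Pi.single ⟨i, hd⟩ 1) =
        (((n / s : ℕ) : K)) •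
          (∑ k : {_i : ZMod s // s ∣ n}, Pi.single k 1 : CycSp K s n) :=
  dTilde2_matrix_general K s n hd
end
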